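/- arXiv:2306.10446 — 2 statements merged into one kernel-verified Lean document; each statement's English description precedes it below -/
import Mathlib

section
/- Let k be a field with char k ∉ {2,3}, and let k⟦t⟧ be the ring of formal power series over k. Let v = (a,b,c,d) ∈ (k⟦t⟧)⁴ be a binary cubic form over k⟦t⟧ with Δ₃(v) ≠ 0, and let M ⊆ (k⟦t⟧)⁴ be the image of the k⟦t⟧-linear map M₂(k⟦t⟧) → (k⟦t⟧)⁴ sending X to X·v (the Lie algebra action). Then the quotient (k⟦t⟧)⁴ / M is a finite-dimensional k-vector space of dimension equal to the t-adic order of Δ₃(v). -/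
/-!
The map `X ↦ X·v` is `k⟦t⟧`-linear in the four entries of `X`, with a `4 × 4` matrix whose
determinant is exactly `Δ₃(v)`; so it is injective and `M` is its image. For an injective
endomorphism `f` of a finite free `k⟦t⟧`-module, the Smith normal form writes the cokernel as
`⊕ k⟦t⟧ ⧸ (aᵢ)` with `∏ aᵢ` associated to `det f`, and `k⟦t⟧ ⧸ (a) ≅ k⟦t⟧ ⧸ (t ^ ord a)` has
`k`-dimension `ord a`. Summing, the dimension of the cokernel is `ord (det f)`.
-/

/-- The discriminant of the binary cubic form `a·x³ + b·x²y + c·xy² + d·y³`. -/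
def disc3 {R : Type*} [CommRing R] (a b c d : R) : R :=
  b ^ 2 * c ^ 2 - 4 * a * c ^ 3 - 4 * b ^ 3 * d - 27 * a ^ 2 * d ^ 2 + 18 * a * b * c * d

/-- The Lie algebra action of `M₂(R)` on binary cubic forms, in coordinates:
for `X = [[α,β],[γ,δ]]` and `f ↔ (a,b,c,d)`,
`X·(a,b,c,d) = ((2α−δ)a + βb, 3γa + αb + 2βc, 2γb + δc + 3βd, γc + (2δ−α)d)`. -/
def lieAct3 {R : Type*} [CommRing R] (X : Matrix (Fin 2) (Fin 2) R) (v : Fin 4 → R) :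
    Fin 4 → R :=
  ![(2 * X 0 0 - X 1 1) * v 0 + X 0 1 * v 1,
    3 * X 1 0 * v 0 + X 0 0 * v 1 + 2 * X 0 1 * v 2,
    2 * X 1 0 * v 1 + X 1 1 * v 2 + 3 * X 0 1 * v 3,
    X 1 0 * v 2 + (2 * X 1 1 - X 0 0) * v 3]

open PowerSeries Module Submodule

theorem Submodule.associated_det_subtype_comp_prod_smithNormalFormCoeffs {R M ι : Type*}
    [CommRing R] [IsDomain R] [IsPrincipalIdealRing R] [AddCommGroup M] [Module R M]
    [Fintype ι] [DecidableEq ι] (b : Basis ι R M) {N : Submodule R M}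
    (h : finrank R N = finrank R M) (e : M ≃ₗ[R] N) :
    Associated (LinearMap.det (N.subtype ∘ₗ e)) (∏ i, smithNormalFormCoeffs b h i) := by
  let b' := smithNormalFormTopBasis b h
  let g : M →ₗ[R] M := N.subtype ∘ₗ (b'.equiv (smithNormalFormBotBasis b h) (.refl ι))
  have hg : LinearMap.det g = ∏ i, smithNormalFormCoeffs b h i := by
    have hgb' : ⇑g ∘ ⇑b' = fun i => smithNormalFormCoeffs b h i • b' i :=
      funext fun i => by simp [g, b']
    simpa [hgb', AlternatingMap.map_smul_univ, b'.det_self] using (b'.det_comp g b').symm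
  rw [← hg]
  exact LinearMap.associated_det_comp_equiv _ _ _

namespace PowerSeries

theorem order_eq_of_associated {R : Type*} [Semiring R] [NoZeroDivisors R] [Nontrivial R]
    {f g : R⟦X⟧} (h : Associated f g) : f.order = g.order := by
  obtain ⟨u, rfl⟩ := h
  rw [order_mul, order_zero_of_unit u.isUnit, add_zero]

variable {k : Type*} [Field k]

theorem span_X_pow_order_toNat {g : k⟦X⟧} (hg : g ≠ 0) :
    Ideal.span {(X : k⟦X⟧) ^ g.order.toNat} = Ideal.span {g} := by
  rw [Ideal.span_singleton_eq_span_singleton]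
  conv_rhs => rw [← X_pow_order_mul_divXPowOrder (f := g)]
  exact associated_mul_unit_right _ _ (isUnit_divided_by_X_pow_order hg)

noncomputable def coeffsBelow (n : ℕ) : k⟦X⟧ →ₗ[k] Fin n → k :=
  LinearMap.pi fun i => coeff (i : ℕ)

theorem coeffsBelow_surjective (n : ℕ) : Function.Surjective (coeffsBelow (k := k) n) := by
  intro c
  refine ⟨∑ i : Fin n, monomial (i : ℕ) (c i), funext fun j => ?_⟩
  simp [coeffsBelow, coeff_monomial, Fin.val_inj]

theorem ker_coeffsBelow (n : ℕ) :
    LinearMap.ker (coeffsBelow (k := k) n) = (Ideal.span {(X : k⟦X⟧) ^ n}).restrictScalars k := by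
  ext f
  simp only [LinearMap.mem_ker, restrictScalars_mem, Ideal.mem_span_singleton, X_pow_dvd_iff,
    funext_iff, coeffsBelow, LinearMap.pi_apply, Pi.zero_apply]
  exact ⟨fun h m hm => h ⟨m, hm⟩, fun h i => h i i.2⟩

noncomputable def quotientSpanXPowEquiv (n : ℕ) :
    (k⟦X⟧ ⧸ Ideal.span {(X : k⟦X⟧) ^ n}) ≃ₗ[k] (Fin n → k) :=
  (Quotient.restrictScalarsEquiv k (Ideal.span {(X : k⟦X⟧) ^ n})).symm ≪≫ₗ
    quotEquivOfEq _ _ (ker_coeffsBelow n).symm ≪≫ₗ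
    (coeffsBelow (k := k) n).quotKerEquivOfSurjective (coeffsBelow_surjective n)

noncomputable def quotientSpanSingletonEquiv {g : k⟦X⟧} (hg : g ≠ 0) :
    (k⟦X⟧ ⧸ Ideal.span {g}) ≃ₗ[k] (Fin g.order.toNat → k) :=
  (Ideal.quotientEquivAlgOfEq k (span_X_pow_order_toNat hg).symm).toLinearEquiv.trans
    (quotientSpanXPowEquiv _)

theorem finiteDimensional_quotient_span_singleton {g : k⟦X⟧} (hg : g ≠ 0) :
    FiniteDimensional k (k⟦X⟧ ⧸ Ideal.span {g}) :=
  .equiv (quotientSpanSingletonEquiv hg).symm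

theorem finrank_quotient_span_singleton {g : k⟦X⟧} (hg : g ≠ 0) :
    (finrank k (k⟦X⟧ ⧸ Ideal.span {g}) : ℕ∞) = g.order := by
  rw [(quotientSpanSingletonEquiv hg).finrank_eq, finrank_fin_fun,
    ENat.natCast_toNat (order_eq_top.not.mpr hg)]

section Quotient

variable {M ι : Type*} [AddCommGroup M] [Module k⟦X⟧ M] [Module k M] [IsScalarTower k k⟦X⟧ M]
  [Fintype ι] {N : Submodule k⟦X⟧ M}

theorem finiteDimensional_quotient_of_finrank_eq (b : Basis ι k⟦X⟧ M)
    (h : finrank k⟦X⟧ N = finrank k⟦X⟧ M) : FiniteDimensional k (M ⧸ N) :=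
  haveI := fun i => finiteDimensional_quotient_span_singleton (smithNormalFormCoeffs_ne_zero b h i)
  .equiv ((N.quotientEquivPiSpan b h).restrictScalars k).symm

theorem finrank_quotient_eq_order_prod_smithNormalFormCoeffs (b : Basis ι k⟦X⟧ M)
    (h : finrank k⟦X⟧ N = finrank k⟦X⟧ M) :
    (finrank k (M ⧸ N) : ℕ∞) = (∏ i, smithNormalFormCoeffs b h i).order := by
  have := fun i => finiteDimensional_quotient_span_singleton (smithNormalFormCoeffs_ne_zero b h i)
  rw [finrank_quotient_eq_sum k b h, Nat.cast_sum, order_prod]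
  exact Finset.sum_congr rfl fun i _ =>
    finrank_quotient_span_singleton (smithNormalFormCoeffs_ne_zero b h i)

end Quotient

section Range

variable {M : Type*} [AddCommGroup M] [Module k⟦X⟧ M] [Module k M] [IsScalarTower k k⟦X⟧ M]
  [Module.Free k⟦X⟧ M] [Module.Finite k⟦X⟧ M] {f : M →ₗ[k⟦X⟧] M}

theorem finiteDimensional_quotient_range (hf : Function.Injective f) :
    FiniteDimensional k (M ⧸ LinearMap.range f) :=
  finiteDimensional_quotient_of_finrank_eq (Free.chooseBasis k⟦X⟧ M)
    (LinearMap.finrank_range_of_inj hf)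

theorem finrank_quotient_range_eq_order_det (hf : Function.Injective f) :
    (finrank k (M ⧸ LinearMap.range f) : ℕ∞) = (LinearMap.det f).order := by
  classical
  let b := Free.chooseBasis k⟦X⟧ M
  have h := LinearMap.finrank_range_of_inj hf
  have hdet : Associated (LinearMap.det f) (∏ i, smithNormalFormCoeffs b h i) :=
    associated_det_subtype_comp_prod_smithNormalFormCoeffs b h (LinearEquiv.ofInjective f hf)
  rw [finrank_quotient_eq_order_prod_smithNormalFormCoeffs b h, order_eq_of_associated hdet]

end Range

end PowerSeries

section BinaryCubic

open Matrix

variable {R : Type*} [CommRing R]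

def lieAct3Matrix (v : Fin 4 → R) : Matrix (Fin 4) (Fin 4) R :=
  !![2 * v 0, v 1, 0, -v 0;
     v 1, 2 * v 2, 3 * v 0, 0;
     0, 3 * v 3, 2 * v 1, v 2;
     -v 3, 0, v 2, 2 * v 3]

theorem lieAct3_eq_mulVec (X : Matrix (Fin 2) (Fin 2) R) (v : Fin 4 → R) :
    lieAct3 X v = lieAct3Matrix v *ᵥ ![X 0 0, X 0 1, X 1 0, X 1 1] := by
  ext i
  fin_cases i <;>
    simp only [lieAct3, lieAct3Matrix, mulVec, dotProduct, Fin.sum_univ_four, of_apply,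
      cons_val', cons_val_zero, cons_val_one, cons_val, cons_val_fin_one, Fin.zero_eta,
      Fin.mk_one, Fin.reduceFinMk] <;>
    ring

theorem range_lieAct3 (v : Fin 4 → R) :
    Set.range (fun X : Matrix (Fin 2) (Fin 2) R => lieAct3 X v) =
      Set.range (lieAct3Matrix v).mulVec := by
  ext w
  simp only [Set.mem_range, lieAct3_eq_mulVec]
  constructor
  · rintro ⟨X, rfl⟩
    exact ⟨_, rfl⟩
  · rintro ⟨x, rfl⟩
    refine ⟨!![x 0, x 1; x 2, x 3], congrArg _ ?_⟩
    ext i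
    fin_cases i <;> rfl

theorem det_lieAct3Matrix (v : Fin 4 → R) :
    (lieAct3Matrix v).det = disc3 (v 0) (v 1) (v 2) (v 3) := by
  rw [lieAct3Matrix, disc3, det_succ_row_zero, Fin.sum_univ_four]
  simp only [det_fin_three, submatrix_apply, of_apply, cons_val', cons_val_zero, cons_val_one,
    cons_val, cons_val_fin_one, Fin.succAbove, Fin.succ_zero_eq_one, Fin.succ_one_eq_two,
    Fin.reduceSucc, Fin.castSucc_zero, Fin.castSucc_one, Fin.reduceCastSucc, Fin.reduceLT,
    Fin.lt_one_iff, Fin.reduceEq, zero_lt_one, lt_self_iff_false, ↓reduceIte, Fin.coe_ofNat_eq_mod]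
  ring

end BinaryCubic

theorem finrank_quotient_lieAct3_eq_order_disc3_general {k : Type*} [Field k]
    (v : Fin 4 → PowerSeries k)
    (hv : disc3 (v 0) (v 1) (v 2) (v 3) ≠ 0)
    (M : Submodule (PowerSeries k) (Fin 4 → PowerSeries k))
    (hM : (M : Set (Fin 4 → PowerSeries k)) =
      Set.range (fun X : Matrix (Fin 2) (Fin 2) (PowerSeries k) => lieAct3 X v)) :
    FiniteDimensional k ((Fin 4 → PowerSeries k) ⧸ M) ∧
      (Module.finrank k ((Fin 4 → PowerSeries k) ⧸ M) : ℕ∞) =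
        PowerSeries.order (disc3 (v 0) (v 1) (v 2) (v 3)) := by
  let f := Matrix.toLin' (lieAct3Matrix v)
  have hfM : LinearMap.range f = M := SetLike.coe_injective <| by
    rw [hM, range_lieAct3, LinearMap.coe_range]
    rfl
  have hf : Function.Injective f :=
    Matrix.mulVec_injective_of_det_ne_zero (by rwa [det_lieAct3Matrix])
  rw [← hfM, ← det_lieAct3Matrix, ← LinearMap.det_toLin']
  exact ⟨finiteDimensional_quotient_range hf, finrank_quotient_range_eq_order_det hf⟩

/-- Let `k` be a field of characteristic not `2` or `3`, and let `v` be a binary cubic form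
over `k⟦t⟧` with `Δ₃(v) ≠ 0`.  If `M ⊆ k⟦t⟧⁴` is the image of the Lie algebra action map
`M₂(k⟦t⟧) → k⟦t⟧⁴`, `X ↦ X·v`, then `k⟦t⟧⁴/M` is a finite-dimensional `k`-vector space of
dimension equal to the `t`-adic order of `Δ₃(v)`. -/
theorem finrank_quotient_lieAct3_eq_order_disc3 {k : Type*} [Field k]
    (hchar2 : ringChar k ≠ 2) (hchar3 : ringChar k ≠ 3)
    (v : Fin 4 → PowerSeries k)
    (hv : disc3 (v 0) (v 1) (v 2) (v 3) ≠ 0)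
    (M : Submodule (PowerSeries k) (Fin 4 → PowerSeries k))
    (hM : (M : Set (Fin 4 → PowerSeries k)) =
      Set.range (fun X : Matrix (Fin 2) (Fin 2) (PowerSeries k) => lieAct3 X v)) :
    FiniteDimensional k ((Fin 4 → PowerSeries k) ⧸ M) ∧
      (Module.finrank k ((Fin 4 → PowerSeries k) ⧸ M) : ℕ∞) =
        PowerSeries.order (disc3 (v 0) (v 1) (v 2) (v 3)) :=
  finrank_quotient_lieAct3_eq_order_disc3_general v hv M hM
end

section
/- Let F be a finite field of cardinality q with q coprime to 6. Then the number of quadruples v ∈ F⁴ (binary cubic forms over F) with Δ₃(v) ≠ 0 equals q(q−1)(q²−1), i.e. q⁴·(1 − q⁻¹)(1 − q⁻²). -/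
theorem natCast_ne_zero_of_coprime_card {F : Type*} [Field F] [Fintype F] {n : ℕ}
    (h : (Fintype.card F).Coprime n) : (n : F) ≠ 0 := by
  intro hn
  have := Nat.dvd_gcd (ringChar.dvd (FiniteField.cast_card_eq_zero F)) (ringChar.dvd hn)
  rw [h, Nat.dvd_one] at this
  exact CharP.ringChar_ne_one this

namespace BinaryCubic

section CommRing

variable {R : Type*} [CommRing R]

/-- The coefficients of `ℓ² (u x + v y)`, where `ℓ = x + t y` for `some t` and `ℓ = y` for
`none`; `Option R` stands for the projective line, each point given by its linear form `ℓ`. -/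
def withDoubleFactor : Option R → R × R → Fin 4 → R
  | some t, (u, v) => ![u, v + 2 * t * u, 2 * t * v + t ^ 2 * u, t ^ 2 * v]
  | none, (u, v) => ![0, 0, u, v]

theorem disc3_withDoubleFactor (l : Option R) (p : R × R) :
    disc3 (withDoubleFactor l p 0) (withDoubleFactor l p 1) (withDoubleFactor l p 2)
      (withDoubleFactor l p 3) = 0 := by
  obtain ⟨u, v⟩ := p
  cases l <;>
  · simp only [disc3, withDoubleFactor, Matrix.cons_val_zero, Matrix.cons_val_one, Matrix.cons_val]
    ring

theorem withDoubleFactor_injective (l : Option R) : (withDoubleFactor (R := R) l).Injective := by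
  rintro ⟨u, v⟩ ⟨u', v'⟩ h
  have h0 := congrFun h 0
  have h1 := congrFun h 1
  have h2 := congrFun h 2
  have h3 := congrFun h 3
  cases l <;>
  · simp only [withDoubleFactor, Matrix.cons_val_zero, Matrix.cons_val_one, Matrix.cons_val]
      at h0 h1 h2 h3
    simp_all

theorem withDoubleFactor_eq_zero_iff {l : Option R} {p : R × R} :
    withDoubleFactor l p = 0 ↔ p = 0 := by
  have h0 : withDoubleFactor l (0 : R × R) = 0 := by
    cases l <;> ext i <;> fin_cases i <;> simp [withDoubleFactor]
  rw [← h0, (withDoubleFactor_injective l).eq_iff]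

theorem withDoubleFactor_some_ne_none {t : R} {p p' : R × R} (hp : p ≠ 0) :
    withDoubleFactor (some t) p ≠ withDoubleFactor none p' := by
  obtain ⟨u, v⟩ := p
  intro h
  have h0 := congrFun h 0
  have h1 := congrFun h 1
  simp only [withDoubleFactor, Matrix.cons_val_zero, Matrix.cons_val_one] at h0 h1
  subst h0
  exact hp (by simpa using h1)

def IsMultipleRoot (a b c d r : R) : Prop :=
  a * r ^ 3 + b * r ^ 2 + c * r + d = 0 ∧ 3 * a * r ^ 2 + 2 * b * r + c = 0

theorem withDoubleFactor_of_isMultipleRoot {a b c d r : R} (hr : IsMultipleRoot a b c d r) :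
    withDoubleFactor (some (-r)) (a, b + 2 * r * a) = ![a, b, c, d] := by
  have hb : b + 2 * r * a + 2 * -r * a = b := by ring
  have hc : 2 * -r * (b + 2 * r * a) + (-r) ^ 2 * a = c := by linear_combination -hr.2
  have hd : (-r) ^ 2 * (b + 2 * r * a) = d := by linear_combination -hr.1 + r * hr.2
  rw [withDoubleFactor, hb, hc, hd]

end CommRing

section Domain

variable {R : Type*} [CommRing R] [IsDomain R]

theorem eq_of_withDoubleFactor_some_eq {t t' : R} {p p' : R × R} (hp : p ≠ 0)
    (h : withDoubleFactor (some t) p = withDoubleFactor (some t') p') : t = t' := by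
  obtain ⟨u, v⟩ := p
  obtain ⟨u', v'⟩ := p'
  have h0 := congrFun h 0
  have h1 := congrFun h 1
  have h2 := congrFun h 2
  have h3 := congrFun h 3
  simp only [withDoubleFactor, Matrix.cons_val_zero, Matrix.cons_val_one, Matrix.cons_val]
    at h0 h1 h2 h3
  by_contra htt
  have hsq : (t - t') ^ 2 ≠ 0 := pow_ne_zero 2 (sub_ne_zero.mpr htt)
  -- evaluate both sides at the roots `(-t', 1)` and `(-t, 1)` of the two linear factors
  have hv : v = u * t' := by
    have : (t - t') ^ 2 * (v - u * t') = 0 := by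
      linear_combination -t' ^ 3 * h0 + t' ^ 2 * h1 - t' * h2 + h3
    linear_combination (mul_eq_zero.mp this).resolve_left hsq
  have hv' : v' = u' * t := by
    have : (t - t') ^ 2 * (v' - u' * t) = 0 := by
      linear_combination t ^ 3 * h0 - t ^ 2 * h1 + t * h2 - h3
    linear_combination (mul_eq_zero.mp this).resolve_left hsq
  have hu : u = 0 := by
    have : (t - t') * u = 0 := by linear_combination h1 - hv + hv' - (t + 2 * t') * h0
    exact (mul_eq_zero.mp this).resolve_left (sub_ne_zero.mpr htt)
  exact hp (by simp [hu, hv])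

theorem eq_of_withDoubleFactor_eq {l l' : Option R} {p p' : R × R} (hp : p ≠ 0)
    (h : withDoubleFactor l p = withDoubleFactor l' p') : l = l' := by
  have hp' : p' ≠ 0 := by
    rintro rfl
    exact hp (withDoubleFactor_eq_zero_iff.mp (h.trans (withDoubleFactor_eq_zero_iff.mpr rfl)))
  match l, l' with
  | some _, some _ => rw [eq_of_withDoubleFactor_some_eq hp h]
  | some _, none => exact absurd h (withDoubleFactor_some_ne_none hp)
  | none, some _ => exact absurd h.symm (withDoubleFactor_some_ne_none hp')
  | none, none => rfl

theorem injective_withDoubleFactor_of_ne_zero :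
    Function.Injective fun x : Option R × {p : R × R // p ≠ 0} ↦ withDoubleFactor x.1 x.2 := by
  rintro ⟨l, p, hp⟩ ⟨l', p', _⟩ h
  obtain rfl := eq_of_withDoubleFactor_eq hp h
  obtain rfl := withDoubleFactor_injective l h
  rfl

end Domain

section Field

variable {F : Type*} [Field F] {a b c d : F}

-- the common root of `g = a X³ + b X² + c X + d` and `g'` produced by the Euclidean algorithm
theorem isMultipleRoot_div_of_disc3_eq_zero (h2 : (2 : F) ≠ 0) (h : disc3 a b c d = 0)
    (he : 3 * a * c - b ^ 2 ≠ 0) :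
    IsMultipleRoot a b c d ((b * c - 9 * a * d) / (2 * (3 * a * c - b ^ 2))) := by
  unfold disc3 at h
  set e := 3 * a * c - b ^ 2
  set r := (b * c - 9 * a * d) / (2 * e)
  have hr : b * c - 9 * a * d = 2 * e * r := (mul_div_cancel₀ _ (mul_ne_zero h2 he)).symm
  have h2e : (2 * e) ^ 3 ≠ 0 := pow_ne_zero 3 (mul_ne_zero h2 he)
  constructor
  · refine (mul_eq_zero.mp ?_).resolve_left h2e
    calc (2 * e) ^ 3 * (a * r ^ 3 + b * r ^ 2 + c * r + d)
        = a * (2 * e * r) ^ 3 + 2 * b * (2 * e * r) ^ 2 * e + 4 * c * (2 * e * r) * e ^ 2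
          + 8 * d * e ^ 3 := by ring
      _ = 0 := by
        rw [← hr]
        linear_combination (2 * b ^ 3 - 9 * a * b * c + 27 * a ^ 2 * d) * h
  · refine (mul_eq_zero.mp ?_).resolve_left (pow_ne_zero 2 (mul_ne_zero h2 he))
    calc (2 * e) ^ 2 * (3 * a * r ^ 2 + 2 * b * r + c)
        = 3 * a * (2 * e * r) ^ 2 + 4 * b * (2 * e * r) * e + 4 * c * e ^ 2 := by ring
      _ = 0 := by
        rw [← hr]
        linear_combination (-9 * a) * h

theorem isMultipleRoot_neg_div_of_disc3_eq_zero (h3 : (3 : F) ≠ 0) (h : disc3 a b c d = 0)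
    (he : 3 * a * c - b ^ 2 = 0) (ha : a ≠ 0) :
    IsMultipleRoot a b c d (-(b / (3 * a))) := by
  unfold disc3 at h
  have hd : b ^ 3 = 27 * a ^ 2 * d := by
    have : (b ^ 3 - 27 * a ^ 2 * d) ^ 2 = 0 := by
      linear_combination (-27 * a ^ 2) * h -
        (b ^ 4 + 3 * a * b ^ 2 * c + 36 * a ^ 2 * c ^ 2 - 162 * a ^ 2 * b * d) * he
    exact sub_eq_zero.mp (pow_eq_zero_iff two_ne_zero |>.mp this)
  constructor
  · field_simp
    linear_combination (-3 * b) * he - hd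
  · field_simp
    linear_combination he

theorem exists_withDoubleFactor_eq_of_disc3_eq_zero (h2 : (2 : F) ≠ 0) (h3 : (3 : F) ≠ 0)
    (h : disc3 a b c d = 0) : ∃ l p, withDoubleFactor l p = ![a, b, c, d] := by
  by_cases he : 3 * a * c - b ^ 2 = 0
  · by_cases ha : a = 0
    · have hb : b = 0 := by simpa [ha] using he
      exact ⟨none, (c, d), by simp [withDoubleFactor, ha, hb]⟩
    · exact ⟨_, _, withDoubleFactor_of_isMultipleRoot
        (isMultipleRoot_neg_div_of_disc3_eq_zero h3 h he ha)⟩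
  · exact ⟨_, _, withDoubleFactor_of_isMultipleRoot (isMultipleRoot_div_of_disc3_eq_zero h2 h he)⟩

theorem setOf_disc3_eq_zero (h2 : (2 : F) ≠ 0) (h3 : (3 : F) ≠ 0) :
    {v : Fin 4 → F | disc3 (v 0) (v 1) (v 2) (v 3) = 0} =
      insert 0 (Set.range fun x : Option F × {p : F × F // p ≠ 0} ↦ withDoubleFactor x.1 x.2) := by
  ext v
  simp only [Set.mem_ofPred_eq, Set.mem_insert_iff, Set.mem_range]
  constructor
  · intro hv
    obtain ⟨l, p, hlp⟩ := exists_withDoubleFactor_eq_of_disc3_eq_zero h2 h3 hv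
    have hv_eta : ![v 0, v 1, v 2, v 3] = v := by ext i; fin_cases i <;> rfl
    rw [hv_eta] at hlp
    by_cases hp : p = 0
    · exact .inl (hlp ▸ withDoubleFactor_eq_zero_iff.mpr hp)
    · exact .inr ⟨(l, ⟨p, hp⟩), hlp⟩
  · rintro (rfl | ⟨⟨l, p, -⟩, rfl⟩)
    · simp [disc3]
    · exact disc3_withDoubleFactor l p

theorem ncard_setOf_disc3_eq_zero [Fintype F] (h2 : (2 : F) ≠ 0) (h3 : (3 : F) ≠ 0) :
    {v : Fin 4 → F | disc3 (v 0) (v 1) (v 2) (v 3) = 0}.ncard =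
      (Fintype.card F + 1) * (Fintype.card F ^ 2 - 1) + 1 := by
  classical
  have h0 : (0 : Fin 4 → F) ∉
      Set.range fun x : Option F × {p : F × F // p ≠ 0} ↦ withDoubleFactor x.1 x.2 := by
    rintro ⟨⟨l, p, hp⟩, h⟩
    exact hp (withDoubleFactor_eq_zero_iff.mp h)
  rw [setOf_disc3_eq_zero h2 h3, Set.ncard_insert_of_notMem h0, ← Nat.card_coe_set_eq,
    Nat.card_range_of_injective injective_withDoubleFactor_of_ne_zero, Nat.card_prod,
    Nat.card_eq_fintype_card (α := {p : F × F // p ≠ 0})]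
  simp [sq]

end Field

end BinaryCubic

/-- Over a finite field `F` of cardinality `q` coprime to `6`, the number of binary cubic
forms over `F` with nonzero discriminant is `q(q−1)(q²−1)`. -/
theorem card_binaryCubics_disc_ne_zero (F : Type*) [Field F] [Fintype F] (q : ℕ)
    (hq : Fintype.card F = q) (hco : Nat.Coprime q 6) :
    Nat.card {v : Fin 4 → F // disc3 (v 0) (v 1) (v 2) (v 3) ≠ 0} =
      q * (q - 1) * (q ^ 2 - 1) := by
  subst hq
  have h2 : (2 : F) ≠ 0 := mod_cast natCast_ne_zero_of_coprime_card (hco.coprime_dvd_right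
    (by norm_num : 2 ∣ 6))
  have h3 : (3 : F) ≠ 0 := mod_cast natCast_ne_zero_of_coprime_card (hco.coprime_dvd_right
    (by norm_num : 3 ∣ 6))
  have hsplit := Set.ncard_add_ncard_compl {v : Fin 4 → F | disc3 (v 0) (v 1) (v 2) (v 3) = 0}
  have hcompl : {v : Fin 4 → F | disc3 (v 0) (v 1) (v 2) (v 3) = 0}ᶜ.ncard =
      Nat.card {v : Fin 4 → F // disc3 (v 0) (v 1) (v 2) (v 3) ≠ 0} :=
    (Nat.card_coe_set_eq _).symm
  rw [BinaryCubic.ncard_setOf_disc3_eq_zero h2 h3, hcompl, Nat.card_fun, Nat.card_fin,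
    Nat.card_eq_fintype_card (α := F)] at hsplit
  have hq : 1 ≤ Fintype.card F := Fintype.card_pos
  have hq2 : 1 ≤ Fintype.card F ^ 2 := Nat.one_le_pow _ _ hq
  zify [hq, hq2] at hsplit ⊢
  linear_combination hsplit
end
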